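/- arXiv:math/0703868 — 7 statements merged into one kernel-verified Lean document; each statement's English description precedes it below -/
import Mathlib

section
/- Let $d \geq 3$ and let $t_n$ denote the number of spanning trees of the wired $d$-regular tree of height $n$. If the sequence satisfies $t_n = t_{n-1}^{d-1} + (d-1)^{n-1} \prod_{k=1}^{n-1} t_k^{d-2}$ for all $n \geq 2$ (with $t_1 = 1$), then for all $n \geq 4$, $t_n = t_{n-1}^{d-2}(d\, t_{n-1} - (d-1) t_{n-2}^{d-1})$. -/
/-!
Writing `P n = a ^ n * ∏_{k=1}^{n} t k ^ e`, the recurrence reads `t (n+1) = t n ^ (e+1) + P n`,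
and `P (n+1) = a * t (n+1) ^ e * P n`. Substituting `P n = t (n+1) - t n ^ (e+1)` into the
recurrence for `t (n+2)` eliminates the product, leaving a two-term recurrence.
-/

open Finset

theorem eq_pow_mul_sub_of_prod_recurrence {R : Type*} [CommRing R] (a : R) (e : ℕ) (t : ℕ → R)
    (hrec : ∀ n, 1 ≤ n → t (n + 1) = t n ^ (e + 1) + a ^ n * ∏ k ∈ Icc 1 n, t k ^ e)
    {n : ℕ} (hn : 1 ≤ n) :
    t (n + 2) = t (n + 1) ^ e * ((a + 1) * t (n + 1) - a * t n ^ (e + 1)) := by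
  have hsplit : a ^ (n + 1) * ∏ k ∈ Icc 1 (n + 1), t k ^ e
      = a * t (n + 1) ^ e * (a ^ n * ∏ k ∈ Icc 1 n, t k ^ e) := by
    rw [prod_Icc_succ_top (by omega), pow_succ]
    ring
  have hprev : a ^ n * ∏ k ∈ Icc 1 n, t k ^ e = t (n + 1) - t n ^ (e + 1) := by
    rw [hrec n hn]
    ring
  rw [hrec (n + 1) (by omega), hsplit, hprev]
  ring

theorem stmt_0_general (d : ℕ) (hd : 3 ≤ d) (t : ℕ → ℤ)
    (hrec : ∀ n, 2 ≤ n →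
      t n = t (n-1) ^ (d-1) + (d-1 : ℤ) ^ (n-1) * ∏ k ∈ Finset.Icc 1 (n-1), t k ^ (d-2)) :
    ∀ n, 4 ≤ n →
      t n = t (n-1) ^ (d-2) * ((d : ℤ) * t (n-1) - (d-1 : ℤ) * t (n-2) ^ (d-1)) := by
  intro n hn
  obtain ⟨m, rfl⟩ : ∃ m, n = m + 2 := ⟨n - 2, by omega⟩
  have hexp : d - 2 + 1 = d - 1 := by omega
  have hrec' : ∀ k, 1 ≤ k → t (k + 1) =
      t k ^ (d - 2 + 1) + ((d : ℤ) - 1) ^ k * ∏ i ∈ Icc 1 k, t i ^ (d - 2) := by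
    intro k hk
    simpa [hexp] using hrec (k + 1) (by omega)
  simpa [hexp] using eq_pow_mul_sub_of_prod_recurrence _ _ t hrec' (n := m) (by omega)

/-- Lemma 1.1: the spanning tree count of the wired `d`-regular tree of height `n`
satisfies `t n = t (n-1)^(d-2) * (d * t (n-1) - (d-1) * t (n-2)^(d-1))` for `n ≥ 4`. -/
theorem stmt_0 (d : ℕ) (hd : 3 ≤ d) (t : ℕ → ℤ)
    (hpos : ∀ n, 1 ≤ n → 0 < t n) (h1 : t 1 = 1)
    (hrec : ∀ n, 2 ≤ n →
      t n = t (n-1) ^ (d-1) + (d-1 : ℤ) ^ (n-1) * ∏ k ∈ Finset.Icc 1 (n-1), t k ^ (d-2)) :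
    ∀ n, 4 ≤ n →
      t n = t (n-1) ^ (d-2) * ((d : ℤ) * t (n-1) - (d-1 : ℤ) * t (n-2) ^ (d-1)) :=
  stmt_0_general d hd t hrec
end

section
/- Let $a \geq 2$ and define $t_1 = 1$ and $t_n = t_{n-1}^{a} + a^{n-1} \prod_{k=1}^{n-1} t_k^{a-1}$ for $n \geq 2$. Then for all $n \geq 2$, $t_n = (1 + a + \cdots + a^{n-1}) \prod_{k=1}^{n-2} (1 + a + \cdots + a^k)^{a^{n-2-k}(a-1)}$. -/
/-!
Write `q n = 1 + a + ⋯ + a^(n-1)` and `Π n = t 1 ⋯ t n`. By induction,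
`t (n+1) = q (n+1) * Π n ^ (a-1)`: granting it at `n` gives `Π (n+1) = q (n+1) * Π n ^ a`, and
then the recurrence for `t (n+2)` factors as
`q (n+1) ^ (a-1) * (q (n+1) + a^(n+1)) * Π n ^ (a(a-1)) = q (n+2) * Π (n+1) ^ (a-1)`.
The multiplicative recurrence `Π (n+1) = q (n+1) * Π n ^ a` solves to
`Π n = ∏_{j ≤ n} q j ^ a^(n-j)`, and the factor `q 1 = 1` drops out of the product.
-/

open Finset

theorem mul_pow_pred_pow_add_mul {R : Type*} [CommSemiring R] {a : ℕ} (ha : 1 ≤ a) (q y c : R) :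
    (q * y ^ (a - 1)) ^ a + c * (q * y ^ a) ^ (a - 1) = (q + c) * (q * y ^ a) ^ (a - 1) := by
  obtain ⟨b, rfl⟩ := Nat.exists_eq_add_of_le' ha
  simp only [Nat.add_sub_cancel]
  ring

theorem prod_Icc_one_succ {M : Type*} [CommMonoid M] (f : ℕ → M) (n : ℕ) :
    ∏ j ∈ Icc 1 (n + 1), f j = f 1 * ∏ k ∈ Icc 1 n, f (k + 1) := by
  rw [← insert_Icc_add_one_left_eq_Icc (by omega), prod_insert (by simp), ← map_add_right_Icc,
    prod_map]
  rfl

theorem prod_Icc_one_succ_eq_mul_pow {M : Type*} [CommMonoid M] {a : ℕ} (ha : 1 ≤ a)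
    {f : ℕ → M} {n : ℕ} {c : M} (hf : f (n + 1) = c * (∏ k ∈ Icc 1 n, f k) ^ (a - 1)) :
    ∏ k ∈ Icc 1 (n + 1), f k = c * (∏ k ∈ Icc 1 n, f k) ^ a := by
  rw [prod_Icc_succ_top (by omega), hf, mul_left_comm, ← pow_succ', Nat.sub_add_cancel ha]

theorem eq_prod_Icc_pow_of_succ_eq_mul_pow {M : Type*} [CommMonoid M] (a : ℕ) {c P : ℕ → M}
    (h0 : P 0 = 1) (hsucc : ∀ n, P (n + 1) = c (n + 1) * P n ^ a) (n : ℕ) :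
    P n = ∏ j ∈ Icc 1 n, c j ^ a ^ (n - j) := by
  induction n with
  | zero => simp [h0]
  | succ n ih =>
    rw [hsucc, ih, prod_Icc_succ_top (by omega), Nat.sub_self, pow_zero, pow_one, mul_comm,
      ← prod_pow]
    congr 1
    refine prod_congr rfl fun j hj => ?_
    rw [← pow_mul, ← pow_succ, Nat.sub_add_comm (mem_Icc.mp hj).2]

section Recurrence

variable {a : ℕ} {t : ℕ → ℕ}

theorem succ_eq_geom_sum_mul_prod_pow (ha : 1 ≤ a) (h1 : t 1 = 1)
    (hrec : ∀ n, 2 ≤ n → t n = t (n-1) ^ a + a ^ (n-1) * ∏ k ∈ Icc 1 (n-1), t k ^ (a-1))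
    (n : ℕ) :
    t (n + 1) = (∑ i ∈ range (n + 1), a ^ i) * (∏ k ∈ Icc 1 n, t k) ^ (a - 1) := by
  induction n with
  | zero => simp [h1]
  | succ n ih =>
    rw [hrec (n + 1 + 1) (by omega), Nat.add_sub_cancel, prod_pow,
      prod_Icc_one_succ_eq_mul_pow ha ih, ih, sum_range_succ _ (n + 1)]
    exact mul_pow_pred_pow_add_mul ha _ _ _

theorem prod_Icc_eq_prod_geom_sum_pow (ha : 1 ≤ a) (h1 : t 1 = 1)
    (hrec : ∀ n, 2 ≤ n → t n = t (n-1) ^ a + a ^ (n-1) * ∏ k ∈ Icc 1 (n-1), t k ^ (a-1))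
    (n : ℕ) :
    ∏ k ∈ Icc 1 n, t k = ∏ j ∈ Icc 1 n, (∑ i ∈ range j, a ^ i) ^ a ^ (n - j) :=
  eq_prod_Icc_pow_of_succ_eq_mul_pow a (P := fun n => ∏ k ∈ Icc 1 n, t k) (by simp) (fun n =>
    prod_Icc_one_succ_eq_mul_pow ha (succ_eq_geom_sum_mul_prod_pow ha h1 hrec n)) n

end Recurrence

/-- Product formula (2): `t n = q n * ∏_{k=1}^{n-2} q (k+1) ^ (a^(n-2-k)(a-1))`,
where `q m = 1 + a + ... + a^(m-1)`. -/
theorem stmt_1 (a : ℕ) (ha : 2 ≤ a) (t : ℕ → ℕ)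
    (h1 : t 1 = 1)
    (hrec : ∀ n, 2 ≤ n →
      t n = t (n-1) ^ a + a ^ (n-1) * ∏ k ∈ Finset.Icc 1 (n-1), t k ^ (a-1)) :
    ∀ n, 2 ≤ n →
      t n = (∑ i ∈ Finset.range n, a ^ i) *
        ∏ k ∈ Finset.Icc 1 (n-2), (∑ i ∈ Finset.range (k+1), a ^ i) ^ (a ^ (n-2-k) * (a-1)) := by
  intro n hn
  obtain ⟨p, rfl⟩ := Nat.exists_eq_add_of_le' hn
  have ha' : 1 ≤ a := by omega
  rw [succ_eq_geom_sum_mul_prod_pow ha' h1 hrec, prod_Icc_eq_prod_geom_sum_pow ha' h1 hrec,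
    prod_Icc_one_succ]
  simp [← prod_pow, ← pow_mul]
end

section
/- For integers $a \geq 2$ and $n \geq 2$, the product $\left(\prod_{k=1}^{n-2}(1+a+\cdots+a^k)^{a^{n-2-k}(a-1)}\right) \cdot (1+a+\cdots+a^{n-1})$ satisfies the recurrence: for $n \geq 4$ it equals $P_{n-1}^{a-1}\,((a+1) P_{n-1} - a\, P_{n-2}^{a})$, where $P_m$ denotes the corresponding product for height $m$. -/
/-!
Write `S k = 1 + a + ⋯ + a^k` and `Q N = ∏_{k=1}^{N} S k ^ (a^(N-k) (a-1))`, so that `P m = Q (m-2) · S (m-1)`.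
Raising `Q N` to the `a`-th power shifts every exponent up by one power of `a`, which gives
`Q N ^ a · S (N+1) ^ (a-1) = Q (N+1)`. Hence `P (m-2) ^ a = Q (m-3) · S (m-3)`, and the recurrence reduces to the
three-term recurrence `S (k+2) = (a+1) S (k+1) - a S k` of geometric sums.
-/

open Finset

section WeightedProd

variable {M : Type*} [CommMonoid M] (f : ℕ → M) (a d : ℕ)

def weightedProd (N : ℕ) : M :=
  ∏ k ∈ Icc 1 N, f k ^ (a ^ (N - k) * d)

theorem weightedProd_pow_mul_pow (N : ℕ) :
    weightedProd f a d N ^ a * f (N + 1) ^ d = weightedProd f a d (N + 1) := by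
  rw [weightedProd, weightedProd, prod_Icc_succ_top (by omega), ← prod_pow, Nat.sub_self, pow_zero,
    one_mul]
  congr 1
  refine prod_congr rfl fun k hk => ?_
  rw [← pow_mul, Nat.sub_add_comm (mem_Icc.mp hk).2, pow_succ]
  ring_nf

end WeightedProd

theorem weightedProd_mul_recurrence {R : Type*} [CommRing R] (x : R) (f : ℕ → R)
    (hf : ∀ k, f (k + 2) = (x + 1) * f (k + 1) - x * f k) {a : ℕ} (ha : 1 ≤ a) (N : ℕ) :
    weightedProd f a (a - 1) (N + 2) * f (N + 3) =
      (weightedProd f a (a - 1) (N + 1) * f (N + 2)) ^ (a - 1) *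
        ((x + 1) * (weightedProd f a (a - 1) (N + 1) * f (N + 2)) -
          x * (weightedProd f a (a - 1) N * f (N + 1)) ^ a) := by
  obtain ⟨b, rfl⟩ : ∃ b, a = b + 1 := ⟨a - 1, by omega⟩
  rw [Nat.add_sub_cancel, ← weightedProd_pow_mul_pow f (b + 1) b (N + 1), hf (N + 1),
    ← weightedProd_pow_mul_pow f (b + 1) b N]
  ring

theorem geom_sum_range_add_three {R : Type*} [CommRing R] (x : R) (k : ℕ) :
    ∑ i ∈ range (k + 3), x ^ i =
      (x + 1) * ∑ i ∈ range (k + 2), x ^ i - x * ∑ i ∈ range (k + 1), x ^ i := by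
  rw [geom_sum_succ, geom_sum_succ (n := k + 1)]
  ring

/-- The closed-form product `P n` satisfies the recurrence
`P n = P (n-1)^(a-1) * ((a+1) P (n-1) - a P (n-2)^a)` for `n ≥ 4`. -/
theorem stmt_2 (a : ℕ) (ha : 2 ≤ a) (P : ℕ → ℤ)
    (hP : ∀ m, 2 ≤ m →
      P m = (∏ k ∈ Finset.Icc 1 (m-2),
          ((∑ i ∈ Finset.range (k+1), (a : ℤ) ^ i) ^ (a ^ (m-2-k) * (a-1)))) *
        (∑ i ∈ Finset.range m, (a : ℤ) ^ i)) :
    ∀ n, 4 ≤ n →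
      P n = P (n-1) ^ (a-1) * (((a : ℤ)+1) * P (n-1) - (a : ℤ) * P (n-2) ^ a) := by
  intro n hn
  obtain ⟨N, rfl⟩ : ∃ N, n = N + 4 := ⟨n - 4, by omega⟩
  set S : ℕ → ℤ := fun k => ∑ i ∈ range (k + 1), (a : ℤ) ^ i
  have hP' : ∀ m, P (m + 2) = weightedProd S a (a - 1) m * S (m + 1) := fun m => by
    simpa [weightedProd, S] using hP (m + 2) (by omega)
  simpa [hP'] using
    weightedProd_mul_recurrence (a : ℤ) S (fun k => geom_sum_range_add_three _ k) (by omega) N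
end

section
/- Let $a \geq 2$ and define groups $H_n$ recursively by $H_2 = 0$ and $H_n = H_{n-1}^{\oplus a} \oplus \mathbb{Z}_{q_{n-1}}^{\oplus (a-1)}$ for $n \geq 3$, where $q_k = 1+a+\cdots+a^{k-1}$. Then $H_n \cong \mathbb{Z}_{q_{n-1}}^{a-1} \oplus \mathbb{Z}_{q_{n-2}}^{a(a-1)} \oplus \cdots \oplus \mathbb{Z}_{q_2}^{a^{n-3}(a-1)}$ for all $n \geq 2$. -/
/-!
Passing from `H_n` to `H_{n+1} ≅ H_n^a ⊕ ℤ_{q_n}^{a-1}` multiplies the multiplicity of every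
existing summand `ℤ_{q_k}` by `a` (the exponent `a^{n-1-k}` becomes `a^{n-k}`) and adds the new
summand `ℤ_{q_n}^{a-1}` as the top term, so the decomposition follows by induction from `H_2 = 0`.
-/

def cyclicMultiplicity (a n k : ℕ) : ℕ :=
  if 2 ≤ k ∧ k ≤ n - 1 then a ^ (n - 1 - k) * (a - 1) else 0

abbrev CyclicDecomposition (a : ℕ) (M : ℕ → Type*) (n : ℕ) : Type _ :=
  ∀ k : Fin n, Fin (cyclicMultiplicity a n k) → M k

section Multiplicity

variable (a : ℕ)

theorem cyclicMultiplicity_two (k : ℕ) : cyclicMultiplicity a 2 k = 0 :=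
  if_neg (by omega)

theorem cyclicMultiplicity_succ_of_lt {n k : ℕ} (hk : k < n) :
    cyclicMultiplicity a (n + 1) k = a * cyclicMultiplicity a n k := by
  unfold cyclicMultiplicity
  by_cases h : 2 ≤ k
  · rw [if_pos ⟨h, by omega⟩, if_pos ⟨h, by omega⟩, show n + 1 - 1 - k = n - 1 - k + 1 by omega,
      pow_succ]
    ring
  · rw [if_neg (by omega), if_neg (by omega), mul_zero]

theorem cyclicMultiplicity_succ_self {n : ℕ} (hn : 2 ≤ n) :
    cyclicMultiplicity a (n + 1) n = a - 1 := by
  simp [cyclicMultiplicity, hn]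

end Multiplicity

namespace AddEquiv

def arrowPiFinMul {ι : Type*} (a : ℕ) (c : ι → ℕ) (M : ι → Type*) [∀ i, AddCommMonoid (M i)] :
    (Fin a → ∀ i, Fin (c i) → M i) ≃+ ∀ i, Fin (a * c i) → M i :=
  { (Equiv.piComm _).trans <| Equiv.piCongrRight fun _ =>
      (Equiv.curry _ _ _).symm.trans (Equiv.arrowCongr finProdFinEquiv (Equiv.refl _)) with
    map_add' := fun _ _ => rfl }

def piFinSnoc {n : ℕ} (M : Fin (n + 1) → Type*) [∀ i, AddCommMonoid (M i)] :
    (∀ i, M i) ≃+ (∀ i : Fin n, M i.castSucc) × M (Fin.last n) :=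
  { (Fin.snocEquiv M).symm.trans (Equiv.prodComm _ _) with map_add' := fun _ _ => rfl }

end AddEquiv

instance (a : ℕ) (M : ℕ → Type*) : Subsingleton (CyclicDecomposition a M 2) :=
  ⟨fun _ _ => funext fun k => funext fun x =>
    (Fin.elim0 (finCongr (cyclicMultiplicity_two a k) x))⟩

section Decomposition

variable (a : ℕ) (M : ℕ → Type*) [∀ k, AddCommMonoid (M k)]

def CyclicDecomposition.succEquiv {n : ℕ} (hn : 2 ≤ n) :
    (Fin a → CyclicDecomposition a M n) × (Fin (a - 1) → M n) ≃+
      CyclicDecomposition a M (n + 1) :=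
  let old : (Fin a → CyclicDecomposition a M n) ≃+
      ∀ k : Fin n, Fin (cyclicMultiplicity a (n + 1) k) → M k :=
    (AddEquiv.arrowPiFinMul a _ _).trans <| AddEquiv.piCongrRight fun k =>
      AddEquiv.arrowCongr (finCongr (cyclicMultiplicity_succ_of_lt a k.isLt).symm) (.refl _)
  let new : (Fin (a - 1) → M n) ≃+ (Fin (cyclicMultiplicity a (n + 1) n) → M n) :=
    AddEquiv.arrowCongr (finCongr (cyclicMultiplicity_succ_self a hn).symm) (.refl _)
  (old.prodCongr new).trans
    (AddEquiv.piFinSnoc fun k : Fin (n + 1) => Fin (cyclicMultiplicity a (n + 1) k) → M k).symm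

end Decomposition

theorem stmt_6_general (a : ℕ)
    (q : ℕ → ℕ)
    (H : ℕ → Type) (inst : ∀ n, AddCommGroup (H n))
    (h2 : Subsingleton (H 2))
    (hrec : ∀ n, 3 ≤ n →
      Nonempty (H n ≃+ (Fin a → H (n-1)) × (Fin (a-1) → ZMod (q (n-1))))) :
    ∀ n, 2 ≤ n →
      Nonempty (H n ≃+
        ((k : Fin n) → Fin (if 2 ≤ (k : ℕ) ∧ (k : ℕ) ≤ n - 1
            then a ^ (n - 1 - (k : ℕ)) * (a - 1) else 0) → ZMod (q (k : ℕ)))) := by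
  intro n hn
  change Nonempty (H n ≃+ CyclicDecomposition a (fun k => ZMod (q k)) n)
  induction n, hn using Nat.le_induction with
  | base => exact ⟨(LinearEquiv.ofSubsingleton (R := ℕ) _ _).toAddEquiv⟩
  | succ n hn ih =>
    obtain ⟨eH⟩ := hrec (n + 1) (by omega)
    obtain ⟨e⟩ := ih
    exact ⟨eH.trans <| ((AddEquiv.piCongrRight fun _ => e).prodCongr (.refl _)).trans <|
      CyclicDecomposition.succEquiv a _ hn⟩

/-- The recursively defined groups `H_2 = 0`, `H_n = H_{n-1}^a ⊕ Z_{q_{n-1}}^{a-1}`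
satisfy `H_n ≅ Z_{q_{n-1}}^{a-1} ⊕ Z_{q_{n-2}}^{a(a-1)} ⊕ ⋯ ⊕ Z_{q_2}^{a^{n-3}(a-1)}`. -/
theorem stmt_6 (a : ℕ) (ha : 2 ≤ a)
    (q : ℕ → ℕ) (hq : ∀ k, q k = ∑ i ∈ Finset.range k, a ^ i)
    (H : ℕ → Type) (inst : ∀ n, AddCommGroup (H n))
    (h2 : Subsingleton (H 2))
    (hrec : ∀ n, 3 ≤ n →
      Nonempty (H n ≃+ (Fin a → H (n-1)) × (Fin (a-1) → ZMod (q (n-1))))) :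
    ∀ n, 2 ≤ n →
      Nonempty (H n ≃+
        ((k : Fin n) → Fin (if 2 ≤ (k : ℕ) ∧ (k : ℕ) ≤ n - 1
            then a ^ (n - 1 - (k : ℕ)) * (a - 1) else 0) → ZMod (q (k : ℕ)))) :=
  stmt_6_general a q H inst h2 hrec
end

section
/- Let $d \geq 3$, $a = d-1$, and $p$ a prime not dividing $d(d-1)$. Let $t_p$ be the least positive integer $n$ with $p \mid q_n$, where $q_n = 1 + a + \cdots + a^{n-1}$. Define $G = \mathbb{Z}_{q_{n+1}}^{a} \oplus \bigoplus_{k=2}^{n} \mathbb{Z}_{q_k}^{(a-1)a^{n-k}(a+1)}$. Then the rank of the Sylow $p$-subgroup of $G$ equals $d(d-2)\sum_{m < n,\ m \equiv n \pmod{t_p}} (d-1)^m$ if $n \not\equiv -1 \pmod{t_p}$, and equals $d(d-2)\sum_{m < n,\ m \equiv n \pmod{t_p}} (d-1)^m + (d-1)$ if $n \equiv -1 \pmod{t_p}$, where the sums range over $0 \leq m \leq n-2$ with $m \equiv n \pmod{t_p}$. -/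
/-!
The `p`-torsion of `ZMod m` has order `gcd m p`, i.e. `p` or `1` according as `p ∣ m`, so the
rank is the number of cyclic summands `ZMod q_k` with `p ∣ q_k`. Since
`q_{j+k} = q_j + a^j q_k` and `p ∤ a`, the set of `k` with `p ∣ q_k` is closed under sums and
differences, hence consists of the multiples of its least positive element `t_p`. Counting the
summands `ZMod q_k`, `2 ≤ k ≤ n`, with `t_p ∣ k` and substituting `m = n - k` gives the sum over
`m ≡ n (mod t_p)`, with `(a - 1)(a + 1) = d(d - 2)`; the summand `ZMod q_{n+1}^a` contributes
`a = d - 1` exactly when `t_p ∣ n + 1`.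
-/

open Finset

theorem Nat.card_nsmul_eq_zero_prod {A B : Type*} [AddMonoid A] [AddMonoid B] (n : ℕ) :
    Nat.card {x : A × B // n • x = 0} =
      Nat.card {x : A // n • x = 0} * Nat.card {x : B // n • x = 0} := by
  rw [← Nat.card_prod]
  exact Nat.card_congr <|
    (Equiv.subtypeEquivRight fun x => by simp [Prod.ext_iff]).trans Equiv.subtypeProdEquivProd

theorem Nat.card_nsmul_eq_zero_pi {ι : Type*} [Fintype ι] {M : ι → Type*}
    [∀ i, AddMonoid (M i)] (n : ℕ) :
    Nat.card {x : ∀ i, M i // n • x = 0} = ∏ i, Nat.card {x : M i // n • x = 0} := by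
  rw [← Nat.card_pi]
  exact Nat.card_congr <|
    (Equiv.subtypeEquivRight fun x => by simp [funext_iff]).trans Equiv.subtypePiEquivPi

theorem ZMod.card_nsmul_eq_zero (m n : ℕ) [NeZero m] :
    Nat.card {x : ZMod m // n • x = 0} = m.gcd n := by
  have h := IsAddCyclic.card_nsmulAddMonoidHom_ker (ZMod m) n
  rwa [Nat.card_zmod] at h

theorem ZMod.card_nsmul_eq_zero_fin_of_prime {p : ℕ} (hp : p.Prime) (r m : ℕ) (hm : m ≠ 0) :
    Nat.card {x : Fin r → ZMod m // p • x = 0} = p ^ (if p ∣ m then r else 0) := by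
  have : NeZero m := ⟨hm⟩
  rw [Nat.card_nsmul_eq_zero_pi, prod_const, card_univ, Fintype.card_fin,
    ZMod.card_nsmul_eq_zero]
  split_ifs with h
  · rw [Nat.gcd_eq_right h]
  · rw [((Nat.Prime.coprime_iff_not_dvd hp).mpr h).symm.gcd_eq_one, one_pow, pow_zero]

theorem geom_sum_range_add (a j k : ℕ) :
    ∑ i ∈ range (j + k), a ^ i = ∑ i ∈ range j, a ^ i + a ^ j * ∑ i ∈ range k, a ^ i := by
  simp only [sum_range_add, mul_sum, pow_add]

theorem Nat.Prime.dvd_geom_sum_iff {p a t : ℕ} (hp : p.Prime) (hpa : ¬ p ∣ a) (ht : 0 < t)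
    (htq : p ∣ ∑ i ∈ range t, a ^ i)
    (htmin : ∀ k, 0 < k → p ∣ ∑ i ∈ range k, a ^ i → t ≤ k) (k : ℕ) :
    p ∣ ∑ i ∈ range k, a ^ i ↔ t ∣ k := by
  have dvd_multiple : ∀ s, p ∣ ∑ i ∈ range (t * s), a ^ i := by
    intro s
    induction s with
    | zero => simp
    | succ s ih => rw [Nat.mul_succ, geom_sum_range_add]; exact dvd_add ih (htq.mul_left _)
  refine ⟨fun hk => ?_, fun ⟨s, hs⟩ => hs ▸ dvd_multiple s⟩
  rw [← Nat.div_add_mod k t, geom_sum_range_add, Nat.dvd_add_right (dvd_multiple _)] at hk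
  have hrem : p ∣ ∑ i ∈ range (k % t), a ^ i :=
    (hp.dvd_mul.mp hk).resolve_left fun h => hpa (hp.dvd_of_dvd_pow h)
  by_contra hkt
  exact (Nat.mod_lt k ht).not_ge <|
    htmin _ (Nat.pos_of_ne_zero fun h => hkt (Nat.dvd_of_mod_eq_zero h)) hrem

theorem sum_filter_dvd_range_reflect {M : Type*} [AddCommMonoid M] (f : ℕ → M) (n t : ℕ) :
    ∑ k ∈ (range (n + 1)).filter (fun k => t ∣ k ∧ 2 ≤ k), f (n - k) =
      ∑ m ∈ (range (n - 1)).filter (fun m => m % t = n % t), f m := by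
  refine sum_nbij' (fun k => n - k) (fun m => n - m) ?_ ?_ ?_ ?_ fun _ _ => rfl
  · simp only [mem_filter, mem_range]
    rintro k ⟨hkn, htk, hk2⟩
    refine ⟨by omega, (Nat.modEq_iff_dvd' (Nat.sub_le n k)).mpr ?_⟩
    rwa [Nat.sub_sub_self (by omega)]
  · simp only [mem_filter, mem_range]
    rintro m ⟨hmn, hmod⟩
    exact ⟨by omega, (Nat.modEq_iff_dvd' (by omega)).mp hmod, by omega⟩
  all_goals simp only [mem_filter, mem_range]; intro _ _; omega

theorem stmt_10_general (d n p : ℕ) (hd : 3 ≤ d) (hp : p.Prime)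
    (a : ℕ) (hA : a = d - 1) (hpd : ¬ p ∣ d * (d - 1))
    (q : ℕ → ℕ) (hq : ∀ k, q k = ∑ i ∈ Finset.range k, a ^ i)
    (t : ℕ) (ht : 0 < t ∧ p ∣ q t ∧ ∀ k, 0 < k → p ∣ q k → t ≤ k) :
    Nat.card {x : (Fin a → ZMod (q (n+1))) ×
        ((k : Fin (n+1)) → Fin (if 2 ≤ (k : ℕ)
            then (a - 1) * a ^ (n - (k : ℕ)) * (a + 1) else 0) → ZMod (q (k : ℕ))) //
        p • x = 0} =
      p ^ (if (n + 1) % t = 0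
        then d * (d-2) * (∑ m ∈ (Finset.range (n-1)).filter (fun m => m % t = n % t),
            (d-1) ^ m) + (d - 1)
        else d * (d-2) * ∑ m ∈ (Finset.range (n-1)).filter (fun m => m % t = n % t),
            (d-1) ^ m) := by
  obtain ⟨ht0, htq, htmin⟩ := ht
  have hpa : ¬ p ∣ a := fun h => hpd (hA ▸ h.mul_left d)
  obtain rfl : d = a + 1 := by omega
  obtain rfl : q = fun k => ∑ i ∈ range k, a ^ i := funext hq
  have hdvd := hp.dvd_geom_sum_iff hpa ht0 htq htmin
  have hq0 : ∀ k, k ≠ 0 → ∑ i ∈ range k, a ^ i ≠ 0 := fun k hk =>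
    (sum_pos (fun i _ => pow_pos (by omega) i) (nonempty_range_iff.mpr hk)).ne'
  have factor : ∀ k, Nat.card {x : Fin (if 2 ≤ k then (a - 1) * a ^ (n - k) * (a + 1) else 0) →
      ZMod (∑ i ∈ range k, a ^ i) // p • x = 0} =
        p ^ (if t ∣ k ∧ 2 ≤ k then (a - 1) * a ^ (n - k) * (a + 1) else 0) := by
    intro k
    by_cases hk : 2 ≤ k
    · rw [if_pos hk, ZMod.card_nsmul_eq_zero_fin_of_prime hp _ _ (hq0 k (by omega))]
      simp only [hdvd, hk, and_true]
    · rw [if_neg hk, if_neg (fun h => hk h.2), Nat.card_nsmul_eq_zero_pi, Fin.prod_univ_zero,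
        pow_zero]
  beta_reduce
  rw [Nat.card_nsmul_eq_zero_prod,
    ZMod.card_nsmul_eq_zero_fin_of_prime hp _ _ (hq0 _ n.succ_ne_zero), Nat.card_nsmul_eq_zero_pi]
  simp only [factor]
  rw [Fin.prod_univ_eq_prod_range
      (fun k => p ^ if t ∣ k ∧ 2 ≤ k then (a - 1) * a ^ (n - k) * (a + 1) else 0),
    prod_pow_eq_pow_sum, ← pow_add, ← sum_filter,
    sum_filter_dvd_range_reflect (fun m => (a - 1) * a ^ m * (a + 1))]
  congr 1
  have h2 : a + 1 - 2 = a - 1 := by omega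
  simp only [hdvd, Nat.succ_eq_add_one, Nat.dvd_iff_mod_eq_zero, Nat.add_sub_cancel, h2,
    ← sum_mul, ← mul_sum]
  split_ifs <;> ring

/-- Toumpakari's conjecture: the rank of the Sylow `p`-subgroup of
`G = Z_{q_{n+1}}^a ⊕ ⊕_{k=2}^n Z_{q_k}^{(a-1)a^{n-k}(a+1)}` (measured via the
cardinality of the `p`-torsion) is `d(d-2) ∑_{m<n, m ≡ n (t_p)} (d-1)^m`, plus an
extra `d-1` when `n ≡ -1 (mod t_p)`. -/
theorem stmt_10 (d n p : ℕ) (hd : 3 ≤ d) (hn : 1 ≤ n) (hp : p.Prime)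
    (a : ℕ) (hA : a = d - 1) (hpd : ¬ p ∣ d * (d - 1))
    (q : ℕ → ℕ) (hq : ∀ k, q k = ∑ i ∈ Finset.range k, a ^ i)
    (t : ℕ) (ht : 0 < t ∧ p ∣ q t ∧ ∀ k, 0 < k → p ∣ q k → t ≤ k) :
    Nat.card {x : (Fin a → ZMod (q (n+1))) ×
        ((k : Fin (n+1)) → Fin (if 2 ≤ (k : ℕ)
            then (a - 1) * a ^ (n - (k : ℕ)) * (a + 1) else 0) → ZMod (q (k : ℕ))) //
        p • x = 0} =
      p ^ (if (n + 1) % t = 0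
        then d * (d-2) * (∑ m ∈ (Finset.range (n-1)).filter (fun m => m % t = n % t),
            (d-1) ^ m) + (d - 1)
        else d * (d-2) * ∑ m ∈ (Finset.range (n-1)).filter (fun m => m % t = n % t),
            (d-1) ^ m) :=
  stmt_10_general d n p hd hp a hA hpd q hq t ht
end

section
/- For integers $a \geq 2$ and $n \geq 2$: $q_n \cdot \prod_{k=2}^{n-1} q_k^{a^{n-1-k}(a-1)} = q_n \cdot \prod_{k=1}^{n-2} q_{k+1}^{a^{n-2-k}(a-1)}$, and moreover $(a+1) t_{n-1} - a\, t_{n-2}^{a}$ divides $t_n$ where $t_m = q_m \prod_{k=2}^{m-1} q_k^{a^{m-1-k}(a-1)}$; in fact $t_n = t_{n-1}^{a-1}((a+1)t_{n-1} - a t_{n-2}^a)$ for $n \geq 4$. -/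
/-!
Write `t m = q m * W m` with `W m = ∏_{2 ≤ k < m} q k ^ (a^(m-1-k) (a-1))`. Peeling off the top
factor gives `W (m+1) = q m ^ (a-1) * W m ^ a`, hence `t m ^ a = q m * W (m+1)`. The recurrence
for `t` then reduces to the linear recurrence `q (m+2) = (a+1) q (m+1) - a q m` of the geometric
sums, after factoring out `t (m+1) ^ (a-1) * W (m+1) = q (m+1) ^ (a-1) * W (m+1) ^ a`.
-/

open Finset

theorem Finset.prod_Icc_add_one {M : Type*} [CommMonoid M] (f : ℕ → M) (a b : ℕ) :
    ∏ x ∈ Icc a b, f (x + 1) = ∏ x ∈ Icc (a + 1) (b + 1), f x := by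
  rw [← map_add_right_Icc, prod_map]
  rfl

theorem geom_sum_range_add_two {R : Type*} [CommRing R] (x : R) (m : ℕ) :
    ∑ i ∈ range (m + 2), x ^ i =
      (x + 1) * ∑ i ∈ range (m + 1), x ^ i - x * ∑ i ∈ range m, x ^ i := by
  rw [geom_sum_succ, geom_sum_succ (n := m)]
  ring

section TreeWeight

variable {R : Type*} [CommRing R] (q : ℕ → R) (a : ℕ)

def treeWeight (m : ℕ) : R :=
  ∏ k ∈ Icc 2 (m - 1), q k ^ (a ^ (m - 1 - k) * (a - 1))

variable {q a}

theorem treeWeight_succ {m : ℕ} (hm : 2 ≤ m) :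
    treeWeight q a (m + 1) = q m ^ (a - 1) * treeWeight q a m ^ a := by
  obtain ⟨j, rfl⟩ : ∃ j, m = j + 1 := ⟨m - 1, by omega⟩
  simp only [treeWeight, Nat.add_sub_cancel]
  rw [prod_Icc_succ_top hm, Nat.sub_self, pow_zero, one_mul, mul_comm, ← prod_pow]
  congr 1
  refine prod_congr rfl fun k hk => ?_
  have hkj : k ≤ j := (mem_Icc.mp hk).2
  rw [← pow_mul, show j + 1 - k = j - k + 1 by omega, pow_succ]
  ring_nf

theorem pow_mul_treeWeight {m : ℕ} (ha : 1 ≤ a) (hm : 2 ≤ m) :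
    (q m * treeWeight q a m) ^ a = q m * treeWeight q a (m + 1) := by
  obtain ⟨b, rfl⟩ : ∃ b, a = b + 1 := ⟨a - 1, by omega⟩
  rw [treeWeight_succ hm, Nat.add_sub_cancel]
  ring

theorem mul_treeWeight_add_two (ha : 1 ≤ a)
    (hq : ∀ m, q (m + 2) = (a + 1) * q (m + 1) - a * q m) {m : ℕ} (hm : 2 ≤ m) :
    q (m + 2) * treeWeight q a (m + 2) =
      (q (m + 1) * treeWeight q a (m + 1)) ^ (a - 1) *
        ((a + 1) * (q (m + 1) * treeWeight q a (m + 1)) - a * (q m * treeWeight q a m) ^ a) := by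
  obtain ⟨b, rfl⟩ : ∃ b, a = b + 1 := ⟨a - 1, by omega⟩
  rw [pow_mul_treeWeight ha hm, treeWeight_succ (by omega : 2 ≤ m + 1), hq,
    Nat.add_sub_cancel]
  ring

end TreeWeight

/-- Reindexing of the closed-form spanning tree count, divisibility, and the recurrence
`t n = t (n-1)^(a-1) ((a+1) t (n-1) - a t (n-2)^a)`. -/
theorem stmt_11 (a : ℕ) (ha : 2 ≤ a) (q : ℕ → ℤ) (t : ℕ → ℤ)
    (hq : ∀ k, q k = ∑ i ∈ Finset.range k, (a : ℤ) ^ i)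
    (ht : ∀ m, t m = q m * ∏ k ∈ Finset.Icc 2 (m-1), q k ^ (a ^ (m-1-k) * (a-1))) :
    (∀ n, 2 ≤ n →
      q n * ∏ k ∈ Finset.Icc 2 (n-1), q k ^ (a ^ (n-1-k) * (a-1)) =
      q n * ∏ k ∈ Finset.Icc 1 (n-2), q (k+1) ^ (a ^ (n-2-k) * (a-1))) ∧
    (∀ n, 4 ≤ n →
      (((a : ℤ)+1) * t (n-1) - (a : ℤ) * t (n-2) ^ a) ∣ t n ∧
      t n = t (n-1) ^ (a-1) * (((a : ℤ)+1) * t (n-1) - (a : ℤ) * t (n-2) ^ a)) := by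
  refine ⟨fun n hn => ?_, fun n hn => ?_⟩
  · obtain ⟨m, rfl⟩ : ∃ m, n = m + 2 := ⟨n - 2, by omega⟩
    rw [show m + 2 - 1 = m + 1 by omega, ← prod_Icc_add_one]
    simp only [Nat.add_sub_add_right, Nat.add_sub_cancel]
  · obtain ⟨m, rfl⟩ : ∃ m, n = m + 2 := ⟨n - 2, by omega⟩
    have hq_rec : ∀ k, q (k + 2) = (a + 1) * q (k + 1) - a * q k := fun k => by
      simp only [hq, geom_sum_range_add_two]
    have ht_rec := mul_treeWeight_add_two (by omega) hq_rec (by omega : 2 ≤ m)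
    simp only [treeWeight, ← ht] at ht_rec
    rw [show m + 2 - 1 = m + 1 by omega, Nat.add_sub_cancel, ht_rec]
    exact ⟨dvd_mul_left _ _, rfl⟩
end

section
/- Let $a \geq 2$ and $n \geq 2$. Consider vectors $v = (v_1, \ldots, v_{n-1})$ with entries in $\{0, 1, \ldots, a\}$ satisfying: if $v_i = 0$ then $v_j = a$ for all $j < i$. Define a successor operation as follows: if $v_1 < a$, increment $v_1$; otherwise, if $j$ is minimal with $v_j < a$ (if it exists), the successor is $(a,\ldots,a,0,v_j+1,v_{j+1},\ldots,v_{n-1})$ with $j-2$ leading entries $a$ and the $0$ in position $j-1$; and if all entries equal $a$, the successor is $(a, \ldots, a, 0)$. Then the number of valid vectors is $\sum_{j=0}^{n-1} a^j = (a^n-1)/(a-1)$, and the successor operation is a cyclic permutation of the set of valid vectors. -/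
def auxS (a k : ℕ) : ℕ := ∑ j ∈ Finset.range (k+1), a ^ j

lemma auxS_zero (a : ℕ) : auxS a 0 = 1 := by simp [auxS]

lemma auxS_succ (a k : ℕ) : auxS a (k+1) = a * auxS a k + 1 := by
  have h : auxS a (k+1) = (∑ i ∈ Finset.range (k+1), a ^ (i+1)) + a ^ 0 :=
    Finset.sum_range_succ' _ _
  rw [h]
  simp [auxS, Finset.mul_sum, pow_succ, mul_comm]

lemma auxS_pos (a k : ℕ) : 1 ≤ auxS a k := by
  induction k with
  | zero => simp [auxS_zero]
  | succ k ih => rw [auxS_succ]; omega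

lemma auxT (a : ℕ) (ha : 1 ≤ a) :
    ∀ k, (a-1) * (∑ i ∈ Finset.range k, auxS a i) + k + 1 = auxS a k := by
  intro k
  induction k with
  | zero => simp [auxS_zero]
  | succ k ih =>
    rw [Finset.sum_range_succ, Nat.mul_add, auxS_succ]
    have h1 : a * auxS a k = (a-1) * auxS a k + 1 * auxS a k := by
      rw [← Nat.add_mul]; congr 1; omega
    rw [one_mul] at h1
    omega

def auxD (a m : ℕ) (v : Fin m → ℕ) : ℕ := ∑ i : Fin m, (a - v i) * auxS a (i : ℕ)

noncomputable def auxPred (a m : ℕ) (w : Fin m → ℕ) : Fin m → ℕ :=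
  if h : ∃ i, w i = 0 then
    if ((h.choose : Fin m) : ℕ) = m - 1 then (fun _ => a)
    else fun i => if (i:ℕ) ≤ (h.choose : Fin m) then a
      else if (i:ℕ) = ((h.choose : Fin m) : ℕ) + 1 then w i - 1 else w i
  else fun i => if (i:ℕ) = 0 then w i - 1 else w i

lemma auxD_zero_iff (a m : ℕ) (v : Fin m → ℕ) (hb : ∀ i, v i ≤ a) :
    auxD a m v = 0 ↔ ∀ i, v i = a := by
  constructor
  · intro h i
    have h1 := (Finset.sum_eq_zero_iff).1 h i (Finset.mem_univ i)
    have hS := auxS_pos a (i : ℕ)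
    have h2 : a - v i = 0 := by
      rcases Nat.mul_eq_zero.1 h1 with h' | h'
      · exact h'
      · omega
    have := hb i; omega
  · intro h
    apply Finset.sum_eq_zero
    intro i _
    rw [h i]; simp

lemma auxD_lt (a m : ℕ) (ha : 2 ≤ a) (hm : 1 ≤ m) (v : Fin m → ℕ) (hb : ∀ i, v i ≤ a)
    (hz : ∀ i : Fin m, v i = 0 → ∀ j, j < i → v j = a) : auxD a m v < auxS a m := by
  have E1 := auxT a (by omega) m
  by_cases hex : ∃ p : Fin m, v p = 0
  · obtain ⟨p, hp⟩ := hex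
    have hpre : ∀ i : Fin m, i < p → v i = a := fun i hi => hz p hp i hi
    have hsuf : ∀ i : Fin m, p < i → 1 ≤ v i := by
      intro i hi
      by_contra h
      have h0 : v i = 0 := by omega
      have := hz i h0 p hi
      omega
    -- convert to range sum
    set F : ℕ → ℕ := fun i => if h : i < m then (a - v ⟨i, h⟩) * auxS a i else 0 with hF
    have hDF : auxD a m v = ∑ i ∈ Finset.range m, F i := by
      rw [← Fin.sum_univ_eq_sum_range]
      apply Finset.sum_congr rfl
      intro i _
      simp only [hF, dif_pos i.isLt, Fin.eta]
    have hple : (p : ℕ) + 1 ≤ m := p.isLt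
    have hsplit : (∑ i ∈ Finset.Ico 0 ((p:ℕ)+1), F i) + ∑ i ∈ Finset.Ico ((p:ℕ)+1) m, F i
        = ∑ i ∈ Finset.Ico 0 m, F i :=
      Finset.sum_Ico_consecutive F (Nat.zero_le _) hple
    simp only [← Finset.range_eq_Ico] at hsplit
    have hprefix : ∑ i ∈ Finset.range ((p:ℕ)+1), F i = a * auxS a (p : ℕ) := by
      rw [Finset.sum_range_succ]
      have h0 : ∑ i ∈ Finset.range (p:ℕ), F i = 0 := by
        apply Finset.sum_eq_zero
        intro i hi
        have hi' : i < (p : ℕ) := Finset.mem_range.1 hi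
        have him : i < m := by omega
        have : v ⟨i, him⟩ = a := hpre ⟨i, him⟩ (by simpa [Fin.lt_def] using hi')
        simp [hF, dif_pos him, this]
      have h1 : F (p : ℕ) = a * auxS a (p : ℕ) := by
        simp [hF, dif_pos p.isLt, Fin.eta, hp]
      rw [h0, h1, zero_add]
    have hsuffix : ∑ i ∈ Finset.Ico ((p:ℕ)+1) m, F i
        ≤ (a-1) * ∑ i ∈ Finset.Ico ((p:ℕ)+1) m, auxS a i := by
      rw [Finset.mul_sum]
      apply Finset.sum_le_sum
      intro i hi
      obtain ⟨hi1, hi2⟩ := Finset.mem_Ico.1 hi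
      have h1 : 1 ≤ v ⟨i, hi2⟩ := hsuf ⟨i, hi2⟩ (by simp [Fin.lt_def]; omega)
      simp only [hF, dif_pos hi2]
      exact Nat.mul_le_mul_right _ (by omega)
    have E2 := auxT a (by omega) ((p:ℕ)+1)
    have E3 := auxS_succ a (p : ℕ)
    have E4 : (∑ i ∈ Finset.range ((p:ℕ)+1), auxS a i) + ∑ i ∈ Finset.Ico ((p:ℕ)+1) m, auxS a i
        = ∑ i ∈ Finset.range m, auxS a i := by
      rw [Finset.range_eq_Ico, Finset.range_eq_Ico]
      exact Finset.sum_Ico_consecutive _ (Nat.zero_le _) hple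
    have E5 : (a-1) * (∑ i ∈ Finset.range m, auxS a i)
        = (a-1) * (∑ i ∈ Finset.range ((p:ℕ)+1), auxS a i)
          + (a-1) * ∑ i ∈ Finset.Ico ((p:ℕ)+1) m, auxS a i := by
      rw [← Nat.mul_add, E4]
    have hD : auxD a m v ≤ a * auxS a (p : ℕ) + (a-1) * ∑ i ∈ Finset.Ico ((p:ℕ)+1) m, auxS a i := by
      rw [hDF, ← hsplit, hprefix]
      omega
    omega
  · push_neg at hex
    have hDle : auxD a m v ≤ ∑ i : Fin m, (a-1) * auxS a (i : ℕ) := by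
      apply Finset.sum_le_sum
      intro i _
      have h1 : 1 ≤ v i := by have := hex i; omega
      exact Nat.mul_le_mul_right _ (by omega)
    have h2 : ∑ i : Fin m, (a-1) * auxS a (i : ℕ) = (a-1) * ∑ i ∈ Finset.range m, auxS a i := by
      rw [Finset.mul_sum]
      exact Fin.sum_univ_eq_sum_range (fun i => (a-1) * auxS a i) m
    omega


/-- Lemma 4.1 / Proposition 4.2 combinatorially: the successor operation (adding a
chip at the root and stabilizing) on recurrent level-vectors of the wired `(a+1)`-regular
tree of height `m+1` is a cyclic permutation: it preserves validity and every orbit has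
size exactly `N = 1 + a + ⋯ + a^m`, the number of valid vectors. Here vectors have
`m` entries in `{0,…,a}`, and a zero entry forces all earlier entries to equal `a`. -/
theorem stmt_12 (a m : ℕ) (ha : 2 ≤ a) (hm : 1 ≤ m)
    (valid : (Fin m → ℕ) → Prop)
    (hvalid : ∀ v, valid v ↔ ((∀ i, v i ≤ a) ∧ ∀ i, v i = 0 → ∀ j, j < i → v j = a))
    (succ : (Fin m → ℕ) → (Fin m → ℕ))
    (hsucc1 : ∀ v, valid v → ∀ j : Fin m, (∀ i, i < j → v i = a) → v j < a →
      succ v = fun (i : Fin m) => if (i : ℕ) + 1 < (j : ℕ) then a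
        else if (i : ℕ) + 1 = (j : ℕ) then 0
        else if i = j then v j + 1 else v i)
    (hsucc2 : ∀ v, valid v → (∀ i, v i = a) →
      succ v = fun (i : Fin m) => if (i : ℕ) = m - 1 then 0 else a)
    (N : ℕ) (hN : N = ∑ j ∈ Finset.range (m+1), a ^ j) :
    (N = Nat.card {v : Fin m → ℕ // valid v}) ∧
    ∀ v, valid v →
      valid (succ v) ∧ succ^[N] v = v ∧ ∀ k, 0 < k → k < N → succ^[k] v ≠ v := by
  have hva : ∀ v, valid v → ∀ i, v i ≤ a := fun v hv => ((hvalid v).1 hv).1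
  have hvz : ∀ v, valid v → ∀ i, v i = 0 → ∀ j, j < i → v j = a :=
    fun v hv => ((hvalid v).1 hv).2
  have hN' : N = auxS a m := hN
  have hNpos : 1 ≤ N := by rw [hN']; exact auxS_pos a m
  haveI : NeZero N := ⟨by omega⟩
  set v0 : Fin m → ℕ := fun _ => a with hv0def
  have hv0 : valid v0 := (hvalid v0).2 ⟨fun i => le_rfl, fun i hi => by simp [hv0def] at hi; omega⟩
  -- main case analysis
  have main : ∀ v, valid v → valid (succ v) ∧ auxPred a m (succ v) = v ∧
      ((∀ i, v i = a) → auxD a m v = 0 ∧ auxD a m (succ v) + 1 = auxS a m) ∧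
      ((¬ ∀ i, v i = a) → 1 ≤ auxD a m v ∧ auxD a m (succ v) + 1 = auxD a m v) := by
    intro v hv
    by_cases hall : ∀ i, v i = a
    · -- case C : all entries equal a
      have hwv : succ v = fun i : Fin m => if (i:ℕ) = m - 1 then 0 else a := hsucc2 v hv hall
      refine ⟨?_, ?_, ?_, fun h => absurd hall h⟩
      · rw [hvalid, hwv]
        refine ⟨?_, ?_⟩
        · intro i; dsimp only; split <;> omega
        · intro i hi j hji
          dsimp only at hi ⊢
          have hine : (i:ℕ) = m - 1 := by
            by_contra h; rw [if_neg h] at hi; omega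
          have hjlt : (j:ℕ) < m - 1 := by
            have := Fin.lt_def.mp hji; omega
          rw [if_neg (by omega)]
      · rw [hwv, auxPred]
        have hz : ∃ i : Fin m, (fun i : Fin m => if (i:ℕ) = m-1 then 0 else a) i = 0 :=
          ⟨⟨m-1, by omega⟩, by simp⟩
        rw [dif_pos hz]
        have hcs := hz.choose_spec
        dsimp only at hcs
        have hcc : ((hz.choose : Fin m) : ℕ) = m - 1 := by
          by_contra h; rw [if_neg h] at hcs; omega
        rw [if_pos hcc]
        funext i; exact (hall i).symm
      · intro _
        refine ⟨(auxD_zero_iff a m v (hva v hv)).2 hall, ?_⟩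
        rw [hwv, auxD]
        have hlast : (m-1) < m := by omega
        rw [Finset.sum_eq_single (⟨m-1, hlast⟩ : Fin m)]
        · dsimp only
          rw [if_pos rfl, Nat.sub_zero, ← auxS_succ, show (m-1)+1 = m by omega]
        · intro b _ hb
          have hbne : (b:ℕ) ≠ m - 1 := fun h => hb (Fin.ext h)
          rw [if_neg hbne, Nat.sub_self, zero_mul]
        · intro h; exact absurd (Finset.mem_univ _) h
    · -- case A/B : some entry < a
      push_neg at hall
      obtain ⟨i0, hi0⟩ := hall
      have hex : ∃ k, ∃ h : k < m, v ⟨k, h⟩ < a := by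
        refine ⟨(i0 : ℕ), i0.isLt, ?_⟩
        rw [Fin.eta]
        exact lt_of_le_of_ne (hva v hv i0) hi0
      set jn := Nat.find hex with hjn
      obtain ⟨hjm, hja⟩ := Nat.find_spec hex
      set j : Fin m := ⟨jn, hjm⟩ with hjdef
      have hnall : ¬ ∀ i, v i = a := fun h => by rw [h j] at hja; omega
      have hpre : ∀ i : Fin m, i < j → v i = a := by
        intro i hi
        have hlt : (i:ℕ) < jn := Fin.lt_def.mp hi
        have hnot := Nat.find_min hex hlt
        push_neg at hnot
        have h2 := hnot i.isLt
        rw [Fin.eta] at h2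
        have := hva v hv i
        omega
      have hwv := hsucc1 v hv j hpre hja
      have hD1 : 1 ≤ auxD a m v := by
        have h1 : 1 ≤ (a - v j) * auxS a (j : ℕ) :=
          Nat.one_le_iff_ne_zero.2 (Nat.mul_ne_zero (by omega)
            (by have := auxS_pos a (j:ℕ); omega))
        have h2 : (a - v j) * auxS a (j : ℕ) ≤ ∑ i : Fin m, (a - v i) * auxS a (i : ℕ) :=
          Finset.single_le_sum (f := fun i : Fin m => (a - v i) * auxS a (i : ℕ))
            (fun i _ => Nat.zero_le _) (Finset.mem_univ j)
        rw [auxD]; omega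
      rcases Nat.eq_zero_or_pos jn with hj0 | hjpos
      · -- subcase j = 0
        have hwv' : succ v = fun i : Fin m => if i = j then v j + 1 else v i := by
          rw [hwv]; funext i
          have hj : (j : ℕ) = 0 := hj0
          rw [if_neg (by omega), if_neg (by omega)]
        have hnz : ∀ i : Fin m, i ≠ j → v i ≠ 0 := by
          intro i hij h0
          have hji : j < i := by
            rw [Fin.lt_def]
            have : (i:ℕ) ≠ (j:ℕ) := fun h => hij (Fin.ext h)
            have hj : (j : ℕ) = 0 := hj0
            omega
          have := hvz v hv i h0 j hji
          omega
        refine ⟨?_, ?_, fun h => absurd h hnall, fun _ => ⟨hD1, ?_⟩⟩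
        · rw [hvalid, hwv']
          refine ⟨?_, ?_⟩
          · intro i; dsimp only; split
            · omega
            · exact hva v hv i
          · intro i hi
            dsimp only at hi
            split at hi
            · omega
            · exact absurd hi (hnz i (by assumption))
        · rw [hwv', auxPred]
          have hz' : ¬ ∃ i : Fin m, (fun i : Fin m => if i = j then v j + 1 else v i) i = 0 := by
            rintro ⟨i, hi⟩
            dsimp only at hi
            split at hi
            · omega
            · exact (hnz i (by assumption)) hi
          rw [dif_neg hz']
          funext i
          by_cases hi : (i:ℕ) = 0
          · have hij : i = j := Fin.ext (by rw [hi]; exact hj0.symm)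
            rw [if_pos hi, if_pos hij, hij]
            omega
          · have hij : i ≠ j := fun h => hi (by rw [h]; exact hj0)
            rw [if_neg hi, if_neg hij]
        · rw [hwv', auxD, auxD,
            ← Finset.add_sum_erase _ _ (Finset.mem_univ j),
            ← Finset.add_sum_erase _ (fun i : Fin m => (a - v i) * auxS a (i:ℕ))
              (Finset.mem_univ j)]
          have hsame : ∑ i ∈ Finset.univ.erase j,
              (a - (if i = j then v j + 1 else v i)) * auxS a (i:ℕ)
              = ∑ i ∈ Finset.univ.erase j, (a - v i) * auxS a (i:ℕ) := by
            apply Finset.sum_congr rfl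
            intro i hi
            rw [if_neg (Finset.mem_erase.1 hi).1]
          rw [hsame, if_pos rfl]
          have hSj : auxS a (j : ℕ) = 1 := by
            rw [show (j:ℕ) = 0 from hj0, auxS_zero]
          rw [hSj, mul_one, mul_one]
          omega
      · -- subcase j ≥ 1
        have hm2 : 2 ≤ m := by omega
        have hple : jn - 1 < m := by omega
        set p : Fin m := ⟨jn - 1, hple⟩ with hpdef
        have hpv : (p : ℕ) = jn - 1 := rfl
        have hjv : (j : ℕ) = jn := rfl
        have hppre : ∀ i : Fin m, (i:ℕ) < jn → v i = a := by
          intro i hi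
          exact hpre i (by rw [Fin.lt_def]; exact hi)
        have hnz : ∀ i : Fin m, jn < (i:ℕ) → v i ≠ 0 := by
          intro i hi h0
          have hji : j < i := by rw [Fin.lt_def]; exact hi
          have := hvz v hv i h0 j hji
          omega
        have hpj : p ≠ j := by
          intro h
          have h2 := congrArg (Fin.val) h
          omega
        -- value facts about w := succ v
        have hwp : succ v p = 0 := by
          rw [hwv]; dsimp only
          rw [if_neg (by omega), if_pos (by omega)]
        have hwj : succ v j = v j + 1 := by
          rw [hwv]; dsimp only
          rw [if_neg (by omega), if_neg (by omega), if_pos rfl]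
        refine ⟨?_, ?_, fun h => absurd h hnall, fun _ => ⟨hD1, ?_⟩⟩
        · rw [hvalid, hwv]
          refine ⟨?_, ?_⟩
          · intro i; dsimp only
            split
            · omega
            split
            · omega
            split
            · omega
            · exact hva v hv i
          · intro i hi k hki
            dsimp only at hi ⊢
            have hieq : (i:ℕ) + 1 = (j:ℕ) := by
              by_cases c1 : (i:ℕ) + 1 < (j:ℕ)
              · rw [if_pos c1] at hi; omega
              rw [if_neg c1] at hi
              by_cases c2 : (i:ℕ) + 1 = (j:ℕ)
              · exact c2
              rw [if_neg c2] at hi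
              by_cases c3 : i = j
              · rw [if_pos c3] at hi; omega
              · rw [if_neg c3] at hi
                have hne : (i:ℕ) ≠ (j:ℕ) := fun h => c3 (Fin.ext h)
                exact absurd hi (hnz i (by omega))
            have hklt : (k:ℕ) < (i:ℕ) := Fin.lt_def.mp hki
            rw [if_pos (by omega)]
        · rw [hwv, auxPred]
          have hz' : ∃ i : Fin m, (fun i : Fin m => if (i:ℕ)+1 < (j:ℕ) then a
              else if (i:ℕ)+1 = (j:ℕ) then 0 else if i = j then v j + 1 else v i) i = 0 := by
            refine ⟨p, ?_⟩
            dsimp only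
            rw [if_neg (by omega), if_pos (by omega)]
          rw [dif_pos hz']
          have hcs := hz'.choose_spec
          set c := hz'.choose with hc
          dsimp only at hcs
          have hcval : (c:ℕ) + 1 = (j:ℕ) := by
            by_cases c1 : (c:ℕ) + 1 < (j:ℕ)
            · rw [if_pos c1] at hcs; omega
            rw [if_neg c1] at hcs
            by_cases c2 : (c:ℕ) + 1 = (j:ℕ)
            · exact c2
            rw [if_neg c2] at hcs
            by_cases c3 : c = j
            · rw [if_pos c3] at hcs; omega
            · rw [if_neg c3] at hcs
              have hne : (c:ℕ) ≠ (j:ℕ) := fun h => c3 (Fin.ext h)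
              exact absurd hcs (hnz c (by omega))
          have hcm : ¬ ((c:ℕ) = m - 1) := by omega
          rw [if_neg hcm]
          funext i
          by_cases h1 : (i:ℕ) ≤ (c:ℕ)
          · rw [if_pos h1, (hppre i (by omega)).symm]
          · rw [if_neg h1]
            by_cases h2 : (i:ℕ) = (c:ℕ) + 1
            · have hij : i = j := Fin.ext (by omega)
              rw [if_pos h2, if_neg (by omega), if_neg (by omega), if_pos hij, hij]
              omega
            · have higt : jn < (i:ℕ) := by omega
              have hij : i ≠ j := fun h => by
                rw [h] at higt; omega
              rw [if_neg h2, if_neg (by omega), if_neg (by omega), if_neg hij]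
        · -- D computation, subcase j ≥ 1
          have hwother : ∀ i : Fin m, i ≠ p → i ≠ j → succ v i = v i := by
            intro i hip hij
            rw [hwv]; dsimp only
            by_cases c1 : (i:ℕ)+1 < (j:ℕ)
            · rw [if_pos c1, hppre i (by omega)]
            · rw [if_neg c1, if_neg (fun h => hip (Fin.ext (by omega))), if_neg hij]
          have hpmem : p ∈ Finset.univ.erase j := Finset.mem_erase.2 ⟨hpj, Finset.mem_univ p⟩
          have hS : auxS a (j:ℕ) = a * auxS a (p:ℕ) + 1 := by
            have h := auxS_succ a (jn - 1)
            rw [show jn - 1 + 1 = jn from by omega] at h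
            exact h
          have hXrel : (a - v j) * auxS a (j:ℕ)
              = (a - (v j + 1)) * auxS a (j:ℕ) + auxS a (j:ℕ) := by
            rw [show a - v j = (a - (v j + 1)) + 1 from by omega, Nat.add_mul, one_mul]
          have hRe : ∑ i ∈ (Finset.univ.erase j).erase p, (a - succ v i) * auxS a (i:ℕ)
              = ∑ i ∈ (Finset.univ.erase j).erase p, (a - v i) * auxS a (i:ℕ) := by
            apply Finset.sum_congr rfl
            intro i hi
            have h1 := (Finset.mem_erase.1 hi).1
            have h2 := (Finset.mem_erase.1 (Finset.mem_erase.1 hi).2).1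
            rw [hwother i h1 h2]
          rw [auxD, auxD,
            ← Finset.add_sum_erase _ (fun i : Fin m => (a - succ v i) * auxS a (i:ℕ))
              (Finset.mem_univ j),
            ← Finset.add_sum_erase _ (fun i : Fin m => (a - v i) * auxS a (i:ℕ))
              (Finset.mem_univ j),
            ← Finset.add_sum_erase _ (fun i : Fin m => (a - succ v i) * auxS a (i:ℕ)) hpmem,
            ← Finset.add_sum_erase _ (fun i : Fin m => (a - v i) * auxS a (i:ℕ)) hpmem]
          rw [hwj, hwp, hppre p (by omega), hRe, Nat.sub_zero, Nat.sub_self, zero_mul]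
          simp only [hjv, hpv, Fin.val_mk] at hS hXrel ⊢
          omega
    -- derived facts
  have Dzero : ∀ v, valid v → (auxD a m v = 0 ↔ ∀ i, v i = a) :=
    fun v hv => auxD_zero_iff a m v (hva v hv)
  have Dlt : ∀ v, valid v → auxD a m v < N := by
    intro v hv; rw [hN']; exact auxD_lt a m ha hm v (hva v hv) (hvz v hv)
  have validIter : ∀ k v, valid v → valid (succ^[k] v) := by
    intro k
    induction k with
    | zero => intro v hv; simpa using hv
    | succ k ih =>
      intro v hv
      rw [Function.iterate_succ_apply']
      exact (main _ (ih v hv)).1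
  have dstep : ∀ v, valid v → ((auxD a m (succ v) : ZMod N)) = (auxD a m v : ZMod N) - 1 := by
    intro v hv
    by_cases hall : ∀ i, v i = a
    · obtain ⟨h0, h1⟩ := (main v hv).2.2.1 hall
      have h2 : ((auxD a m (succ v) : ℕ) : ZMod N) + 1 = ((auxS a m : ℕ) : ZMod N) := by
        exact_mod_cast congrArg (Nat.cast : ℕ → ZMod N) h1
      have h3 : ((auxS a m : ℕ) : ZMod N) = 0 := by
        rw [← hN']; exact ZMod.natCast_self N
      rw [h3] at h2
      rw [h0, Nat.cast_zero, zero_sub]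
      exact eq_neg_of_add_eq_zero_left h2
    · obtain ⟨h0, h1⟩ := (main v hv).2.2.2 hall
      have h2 : ((auxD a m (succ v) : ℕ) : ZMod N) + 1 = ((auxD a m v : ℕ) : ZMod N) := by
        exact_mod_cast congrArg (Nat.cast : ℕ → ZMod N) h1
      exact eq_sub_of_add_eq h2
  have dIter : ∀ k v, valid v → (auxD a m (succ^[k] v) : ZMod N) = (auxD a m v : ZMod N) - k := by
    intro k
    induction k with
    | zero => intro v hv; simp
    | succ k ih =>
      intro v hv
      rw [Function.iterate_succ_apply', dstep _ (validIter k v hv), ih v hv]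
      push_cast
      ring
  have injIter : ∀ k v w, valid v → valid w → succ^[k] v = succ^[k] w → v = w := by
    intro k
    induction k with
    | zero => intro v w _ _ h; simpa using h
    | succ k ih =>
      intro v w hv hw h
      rw [Function.iterate_succ_apply', Function.iterate_succ_apply'] at h
      apply ih v w hv hw
      have h1 := (main _ (validIter k v hv)).2.1
      have h2 := (main _ (validIter k w hw)).2.1
      rw [← h1, ← h2, h]
  have reach : ∀ d v, valid v → auxD a m v = d → succ^[d] v = v0 := by
    intro d
    induction d with
    | zero =>
      intro v hv h0
      simp only [Function.iterate_zero, id]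
      funext i
      exact (Dzero v hv).1 h0 i
    | succ d ih =>
      intro v hv hd
      have hall : ¬ ∀ i, v i = a := by
        intro h
        have := (Dzero v hv).2 h
        omega
      obtain ⟨h0, h1⟩ := (main v hv).2.2.2 hall
      rw [Function.iterate_succ_apply]
      exact ih (succ v) (main v hv).1 (by omega)
  have hNv0 : succ^[N] v0 = v0 := by
    have hall : ∀ i, v0 i = a := fun _ => rfl
    obtain ⟨h0, h1⟩ := (main v0 hv0).2.2.1 hall
    have hd : auxD a m (succ v0) = N - 1 := by rw [hN']; omega
    have h2 := reach (N-1) (succ v0) (main v0 hv0).1 hd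
    have h3 : succ^[N] v0 = succ^[N-1] (succ v0) := by
      rw [← Function.iterate_succ_apply, show (N - 1).succ = N from by omega]
    rw [h3, h2]
  have surj : ∀ v, valid v → ∃ k, k < N ∧ succ^[k] v0 = v := by
    intro v hv
    by_cases h0 : auxD a m v = 0
    · refine ⟨0, by omega, ?_⟩
      simp only [Function.iterate_zero, id]
      funext i
      exact ((Dzero v hv).1 h0 i).symm
    · have hdN : auxD a m v < N := Dlt v hv
      refine ⟨N - auxD a m v, by omega, ?_⟩
      apply injIter (auxD a m v) _ _ (validIter _ _ hv0) hv
      rw [← Function.iterate_add_apply,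
        show auxD a m v + (N - auxD a m v) = N from by omega, hNv0]
      exact (reach (auxD a m v) v hv rfl).symm
  constructor
  · -- cardinality
    have hbij : Function.Bijective (fun k : Fin N =>
        (⟨succ^[(k:ℕ)] v0, validIter _ _ hv0⟩ : {v : Fin m → ℕ // valid v})) := by
      constructor
      · intro k k' h
        have h' : succ^[(k:ℕ)] v0 = succ^[(k':ℕ)] v0 := congrArg Subtype.val h
        have e1 := dIter (k:ℕ) v0 hv0
        have e2 := dIter (k':ℕ) v0 hv0
        rw [h', e2] at e1
        have e3 : (((k:ℕ) : ℕ) : ZMod N) = (((k':ℕ) : ℕ) : ZMod N) := sub_right_inj.1 e1.symm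
        have e4 := congrArg ZMod.val e3
        rw [ZMod.val_cast_of_lt k.isLt, ZMod.val_cast_of_lt k'.isLt] at e4
        exact Fin.ext e4
      · rintro ⟨v, hv⟩
        obtain ⟨k, hk, hkv⟩ := surj v hv
        exact ⟨⟨k, hk⟩, Subtype.ext hkv⟩
    have hcard := Nat.card_eq_of_bijective _ hbij
    simpa using hcard
  · intro v hv
    refine ⟨(main v hv).1, ?_, ?_⟩
    · apply injIter (auxD a m v) _ _ (validIter N v hv) hv
      rw [← Function.iterate_add_apply,
        show auxD a m v + N = N + auxD a m v from by omega,
        Function.iterate_add_apply, reach (auxD a m v) v hv rfl, hNv0]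
    · intro k hk0 hkN hkv
      have e := dIter k v hv
      rw [hkv] at e
      have e2 : ((k : ℕ) : ZMod N) = 0 := sub_eq_self.1 e.symm
      have hdvd := (ZMod.natCast_eq_zero_iff k N).1 e2
      have := Nat.le_of_dvd hk0 hdvd
      omega
end
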